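/- Consider the variant of the Disjoint Domination Game in which Dom is allowed to pass on any of his turns except the very first move of the game, while Sepy must make a legal move whenever one exists. Then: (1) Dom has a winning strategy in the Sepy-start game on every finite simple graph without isolated vertices; and (2) Dom has a winning strategy in the Dom-start game on every finite simple graph without isolated vertices that contains at least one connected component on which Dom has a winning strategy in the ordinary (no-passing) Dom-start Disjoint Domination Game. -/
import Mathlib


namespace DDG

variable {V : Type*}

/-- The closed neighborhood `N[v]` of a vertex `v`. -/
def closedNbhd (G : SimpleGraph V) (v : V) : Set V := insert v (G.neighborSet v)

/-- `D` is a dominating set of `G`: every vertex has a member of `D`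
in its closed neighborhood. -/
def Dominates (G : SimpleGraph V) (D : Set V) : Prop :=
  ∀ v : V, (closedNbhd G v ∩ D).Nonempty

/-- A position of the game: the sets of purple and blue vertices. -/
structure Pos (V : Type*) where
  purple : Set V
  blue : Set V

namespace Pos

/-- The vertex class of a color (`true` = purple, `false` = blue). -/
def colorSet (p : Pos V) (c : Bool) : Set V := if c then p.purple else p.blue

/-- The position obtained by coloring vertex `v` with color `c`. -/
def play (p : Pos V) (v : V) (c : Bool) : Pos V :=
  if c then ⟨insert v p.purple, p.blue⟩ else ⟨p.purple, insert v p.blue⟩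

end Pos

/-- A legal move of the Disjoint Domination Game: select an uncolored vertex `v`
and a color `c` such that some `u ∈ N[v]` is not yet dominated in color `c`. -/
def LegalMove (G : SimpleGraph V) (p : Pos V) (v : V) (c : Bool) : Prop :=
  v ∉ p.purple ∪ p.blue ∧ ∃ u ∈ closedNbhd G v, closedNbhd G u ∩ p.colorSet c = ∅

/-- End condition ⟨s⟩: some closed neighborhood is monochromatic; Sepy wins. -/
def SepyEnd (G : SimpleGraph V) (p : Pos V) : Prop :=
  ∃ v : V, closedNbhd G v ⊆ p.purple ∨ closedNbhd G v ⊆ p.blue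

/-- End condition ⟨d⟩: both color classes are dominating sets; Dom wins. -/
def DomEnd (G : SimpleGraph V) (p : Pos V) : Prop :=
  Dominates G p.purple ∧ Dominates G p.blue

/-- `DomWins G turn p` : Dom has a winning strategy in the Disjoint Domination Game
from position `p`, where `turn = true` iff it is Dom's move. -/
inductive DomWins (G : SimpleGraph V) : Bool → Pos V → Prop
  | terminal (turn : Bool) (p : Pos V) :
      ¬ SepyEnd G p → DomEnd G p → DomWins G turn p
  | domStep (p : Pos V) (v : V) (c : Bool) :
      ¬ SepyEnd G p → ¬ DomEnd G p → LegalMove G p v c →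
      DomWins G false (p.play v c) → DomWins G true p
  | sepyStep (p : Pos V) :
      ¬ SepyEnd G p → ¬ DomEnd G p →
      (∃ v c, LegalMove G p v c) →
      (∀ v c, LegalMove G p v c → DomWins G true (p.play v c)) →
      DomWins G false p

/-- `SepyWins G turn p` : Sepy has a winning strategy in the Disjoint Domination Game
from position `p`, where `turn = true` iff it is Dom's move. -/
inductive SepyWins (G : SimpleGraph V) : Bool → Pos V → Prop
  | terminal (turn : Bool) (p : Pos V) : SepyEnd G p → SepyWins G turn p
  | sepyStep (p : Pos V) (v : V) (c : Bool) :
      ¬ SepyEnd G p → ¬ DomEnd G p → LegalMove G p v c →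
      SepyWins G true (p.play v c) → SepyWins G false p
  | domStep (p : Pos V) :
      ¬ SepyEnd G p → ¬ DomEnd G p →
      (∃ v c, LegalMove G p v c) →
      (∀ v c, LegalMove G p v c → SepyWins G false (p.play v c)) →
      SepyWins G true p

end DDG


namespace DDG
/-- `DomWinsDP G turn first p` : Dom has a winning strategy in the variant of the
Disjoint Domination Game in which Dom may pass on any of his turns except the very
first move of the game, while Sepy must move whenever a legal move exists.
Here `turn = true` iff it is Dom's move, and `first = true` iff no move of the game
has been made yet. -/
inductive DomWinsDP (G : SimpleGraph V) : Bool → Bool → Pos V → Prop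
  | terminal (turn first : Bool) (p : Pos V) :
      ¬ SepyEnd G p → DomEnd G p → DomWinsDP G turn first p
  | domStep (first : Bool) (p : Pos V) (v : V) (c : Bool) :
      ¬ SepyEnd G p → ¬ DomEnd G p → LegalMove G p v c →
      DomWinsDP G false false (p.play v c) → DomWinsDP G true first p
  | domPass (p : Pos V) :
      ¬ SepyEnd G p → ¬ DomEnd G p →
      DomWinsDP G false false p → DomWinsDP G true false p
  | sepyStep (first : Bool) (p : Pos V) :
      ¬ SepyEnd G p → ¬ DomEnd G p →
      (∃ v c, LegalMove G p v c) →
      (∀ v c, LegalMove G p v c → DomWinsDP G true false (p.play v c)) →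
      DomWinsDP G false first p
end DDG

namespace DDG

variable {V : Type*}

lemma mem_closedNbhd {G : SimpleGraph V} {u v : V} :
    u ∈ closedNbhd G v ↔ u = v ∨ G.Adj v u := by
  simp [closedNbhd]

lemma self_mem_closedNbhd (G : SimpleGraph V) (v : V) : v ∈ closedNbhd G v :=
  mem_closedNbhd.2 (Or.inl rfl)

lemma adj_mem_closedNbhd {G : SimpleGraph V} {u v : V} (h : G.Adj v u) :
    u ∈ closedNbhd G v := mem_closedNbhd.2 (Or.inr h)

lemma mem_closedNbhd_comm {G : SimpleGraph V} {u v : V} :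
    u ∈ closedNbhd G v ↔ v ∈ closedNbhd G u := by
  rw [mem_closedNbhd, mem_closedNbhd, eq_comm, G.adj_comm]

namespace Pos

lemma mem_play_colorSet {p : Pos V} {v x : V} {c c' : Bool} :
    x ∈ (p.play v c).colorSet c' ↔ (x = v ∧ c' = c) ∨ x ∈ p.colorSet c' := by
  cases c <;> cases c' <;> simp [Pos.play, Pos.colorSet]

lemma colorSet_subset_play (p : Pos V) (v : V) (c c' : Bool) :
    p.colorSet c' ⊆ (p.play v c).colorSet c' :=
  fun _ hx => mem_play_colorSet.2 (Or.inr hx)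

lemma self_mem_play_colorSet (p : Pos V) (v : V) (c : Bool) :
    v ∈ (p.play v c).colorSet c := mem_play_colorSet.2 (Or.inl ⟨rfl, rfl⟩)

lemma colored_play (p : Pos V) (v : V) (c : Bool) :
    (p.play v c).purple ∪ (p.play v c).blue = insert v (p.purple ∪ p.blue) := by
  cases c <;> simp [Pos.play, Set.insert_union, Set.union_insert]

lemma mem_colored_iff {p : Pos V} {x : V} :
    x ∈ p.purple ∪ p.blue ↔ ∃ c, x ∈ p.colorSet c := by
  constructor
  · rintro (h | h)
    exacts [⟨true, h⟩, ⟨false, h⟩]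
  · rintro ⟨c, h⟩
    cases c
    · exact Or.inr h
    · exact Or.inl h

lemma colorSet_empty (c : Bool) : (⟨∅, ∅⟩ : Pos V).colorSet c = ∅ := by
  cases c <;> rfl

lemma colorSet_true (p : Pos V) : p.colorSet true = p.purple := rfl

lemma colorSet_false (p : Pos V) : p.colorSet false = p.blue := rfl

end Pos

lemma sepyEnd_iff {G : SimpleGraph V} {p : Pos V} :
    SepyEnd G p ↔ ∃ v c, closedNbhd G v ⊆ p.colorSet c := by
  constructor
  · rintro ⟨v, h | h⟩
    exacts [⟨v, true, h⟩, ⟨v, false, h⟩]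
  · rintro ⟨v, c, h⟩
    cases c
    · exact ⟨v, Or.inr h⟩
    · exact ⟨v, Or.inl h⟩

lemma dominates_colorSet {G : SimpleGraph V} {p : Pos V} (h : DomEnd G p) (c : Bool) (u : V) :
    (closedNbhd G u ∩ p.colorSet c).Nonempty := by
  cases c
  · exact h.2 u
  · exact h.1 u

/-- Disjointness of the two color classes. -/
def Hdisj (p : Pos V) : Prop := ∀ x c, x ∈ p.colorSet c → x ∈ p.colorSet (!c) → False

/-- Invariant outside `S`: every colored vertex has an oppositely colored neighbor. -/
def Hout (G : SimpleGraph V) (S : Set V) (p : Pos V) : Prop :=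
  ∀ y c, y ∉ S → y ∈ p.colorSet c → ∃ z, G.Adj y z ∧ z ∈ p.colorSet (!c)

/-- Restriction of a position to a set of vertices. -/
def res (S : Set V) (p : Pos V) : Pos S := ⟨Subtype.val ⁻¹' p.purple, Subtype.val ⁻¹' p.blue⟩

lemma res_colorSet (S : Set V) (p : Pos V) (c : Bool) :
    (res S p).colorSet c = Subtype.val ⁻¹' p.colorSet c := by cases c <;> rfl

lemma Hdisj.play {p : Pos V} (h : Hdisj p) {v : V} (hv : v ∉ p.purple ∪ p.blue) (c : Bool) :
    Hdisj (p.play v c) := by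
  intro x c' h1 h2
  rcases Pos.mem_play_colorSet.1 h1 with ⟨rfl, rfl⟩ | h1'
  · rcases Pos.mem_play_colorSet.1 h2 with ⟨-, hcc⟩ | h2'
    · simp at hcc
    · exact hv (Pos.mem_colored_iff.2 ⟨_, h2'⟩)
  · rcases Pos.mem_play_colorSet.1 h2 with ⟨rfl, -⟩ | h2'
    · exact hv (Pos.mem_colored_iff.2 ⟨c', h1'⟩)
    · exact h x c' h1' h2'

lemma Hdisj_empty : Hdisj (⟨∅, ∅⟩ : Pos V) := by
  intro x c hx _
  rw [Pos.colorSet_empty] at hx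
  exact hx

section Transfer

variable {G : SimpleGraph V} {S : Set V}

lemma closedNbhd_subset (hS : ∀ ⦃a b⦄, a ∈ S → G.Adj a b → b ∈ S) {v : V} (hv : v ∈ S) :
    closedNbhd G v ⊆ S := by
  intro u hu
  rcases mem_closedNbhd.1 hu with rfl | h
  · exact hv
  · exact hS hv h

lemma mem_closedNbhd_induce {a b : S} :
    b ∈ closedNbhd (G.induce S) a ↔ b.val ∈ closedNbhd G a.val := by
  simp [mem_closedNbhd, Subtype.ext_iff]

lemma res_inter_empty (hS : ∀ ⦃a b⦄, a ∈ S → G.Adj a b → b ∈ S) {p : Pos V} {u : S} {c : Bool} :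
    closedNbhd (G.induce S) u ∩ (res S p).colorSet c = ∅ ↔
      closedNbhd G u.val ∩ p.colorSet c = ∅ := by
  rw [Set.eq_empty_iff_forall_notMem, Set.eq_empty_iff_forall_notMem]
  constructor
  · rintro h x ⟨hx1, hx2⟩
    have hxS : x ∈ S := closedNbhd_subset hS u.2 hx1
    exact h ⟨x, hxS⟩ ⟨mem_closedNbhd_induce.2 hx1, by rw [res_colorSet]; exact hx2⟩
  · rintro h x ⟨hx1, hx2⟩
    rw [res_colorSet] at hx2
    exact h x.val ⟨mem_closedNbhd_induce.1 hx1, hx2⟩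

lemma res_play_mem {v : V} (hv : v ∈ S) (p : Pos V) (c : Bool) :
    res S (p.play v c) = (res S p).play ⟨v, hv⟩ c := by
  cases c <;>
  · unfold res Pos.play
    simp only [if_true, if_false, Bool.false_eq_true]
    congr 1 <;> · ext x; simp [Subtype.ext_iff]

lemma res_play_not_mem {v : V} (hv : v ∉ S) (p : Pos V) (c : Bool) :
    res S (p.play v c) = res S p := by
  cases c <;>
  · unfold res Pos.play
    simp only [if_true, if_false, Bool.false_eq_true]
    congr 1 <;>
    · ext x
      simp only [Set.mem_preimage, Set.mem_insert_iff]
      constructor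
      · rintro (h | h)
        · exact absurd (h ▸ x.2) hv
        · exact h
      · exact fun h => Or.inr h

lemma legal_res (hS : ∀ ⦃a b⦄, a ∈ S → G.Adj a b → b ∈ S) {p : Pos V} {v : V} (hv : v ∈ S)
    {c : Bool} (h : LegalMove G p v c) : LegalMove (G.induce S) (res S p) ⟨v, hv⟩ c := by
  obtain ⟨hnc, u, hu1, hu2⟩ := h
  have huS : u ∈ S := closedNbhd_subset hS hv hu1
  refine ⟨fun hmem => hnc ?_, ⟨u, huS⟩, mem_closedNbhd_induce.2 hu1, (res_inter_empty hS).2 hu2⟩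
  rcases hmem with h | h
  · exact Or.inl h
  · exact Or.inr h

lemma legal_of_res (hS : ∀ ⦃a b⦄, a ∈ S → G.Adj a b → b ∈ S) {p : Pos V} {w : S} {c : Bool}
    (h : LegalMove (G.induce S) (res S p) w c) : LegalMove G p w.val c := by
  obtain ⟨hnc, u, hu1, hu2⟩ := h
  refine ⟨fun hmem => hnc ?_, u.val, mem_closedNbhd_induce.1 hu1, (res_inter_empty hS).1 hu2⟩
  rcases hmem with h | h
  · exact Or.inl h
  · exact Or.inr h

lemma sepyEnd_res_of (hS : ∀ ⦃a b⦄, a ∈ S → G.Adj a b → b ∈ S) {p : Pos V} {w : V} {c : Bool}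
    (hwS : w ∈ S) (h : closedNbhd G w ⊆ p.colorSet c) : SepyEnd (G.induce S) (res S p) :=
  sepyEnd_iff.2 ⟨⟨w, hwS⟩, c, fun x hx => by
    rw [res_colorSet]; exact h (mem_closedNbhd_induce.1 hx)⟩

lemma domEnd_res (hS : ∀ ⦃a b⦄, a ∈ S → G.Adj a b → b ∈ S) {p : Pos V} (h : DomEnd G p) :
    DomEnd (G.induce S) (res S p) := by
  constructor <;> intro v
  · obtain ⟨x, hx1, hx2⟩ := h.1 v.val
    exact ⟨⟨x, closedNbhd_subset hS v.2 hx1⟩, mem_closedNbhd_induce.2 hx1, hx2⟩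
  · obtain ⟨x, hx1, hx2⟩ := h.2 v.val
    exact ⟨⟨x, closedNbhd_subset hS v.2 hx1⟩, mem_closedNbhd_induce.2 hx1, hx2⟩

end Transfer

lemma no_legal_of_domEnd {W : Type*} {G' : SimpleGraph W} {q : Pos W} (h : DomEnd G' q)
    {v : W} {c : Bool} (hl : LegalMove G' q v c) : False := by
  obtain ⟨-, u, -, hu2⟩ := hl
  have := dominates_colorSet h c u
  rw [hu2] at this
  exact Set.not_nonempty_empty this

lemma exists_legal {G : SimpleGraph V} {p : Pos V} (hnse : ¬SepyEnd G p)
    (hnde : ¬DomEnd G p) : ∃ v c, LegalMove G p v c := by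
  have hcu : ∃ c u, closedNbhd G u ∩ p.colorSet c = ∅ := by
    by_contra hno
    push_neg at hno
    refine hnde ⟨fun w => ?_, fun w => ?_⟩
    · have := hno true w
      rwa [Pos.colorSet_true] at this
    · have := hno false w
      rwa [Pos.colorSet_false] at this
  obtain ⟨c, u, hu⟩ := hcu
  have hv : ∃ v, v ∈ closedNbhd G u ∧ v ∉ p.purple ∪ p.blue := by
    by_contra h
    push_neg at h
    refine hnse (sepyEnd_iff.2 ⟨u, !c, fun x hx => ?_⟩)
    obtain ⟨c₀, hc₀⟩ := Pos.mem_colored_iff.1 (h x hx)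
    have hne : c₀ ≠ c := fun e =>
      Set.eq_empty_iff_forall_notMem.1 hu x ⟨hx, e ▸ hc₀⟩
    have : c₀ = !c := by
      cases c₀ <;> cases c <;> simp_all
    exact this ▸ hc₀
  obtain ⟨v, hv1, hv2⟩ := hv
  exact ⟨v, c, hv2, u, mem_closedNbhd_comm.1 hv1, hu⟩

lemma notSepyEnd_of_domWins_false {W : Type*} {G' : SimpleGraph W} {q : Pos W}
    (h : DomWins G' false q) : ¬SepyEnd G' q := by
  cases h
  case terminal h1 _ => exact h1
  case sepyStep h1 _ _ _ => exact h1

lemma domWins_false_elim {W : Type*} {G' : SimpleGraph W} {q : Pos W}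
    (h : DomWins G' false q) :
    (¬SepyEnd G' q ∧ DomEnd G' q) ∨
    (¬SepyEnd G' q ∧ ¬DomEnd G' q ∧ (∃ v c, LegalMove G' q v c) ∧
      ∀ v c, LegalMove G' q v c → DomWins G' true (q.play v c)) := by
  cases h
  case terminal h1 h2 => exact Or.inl ⟨h1, h2⟩
  case sepyStep h1 h2 h3 h4 => exact Or.inr ⟨h1, h2, h3, h4⟩

lemma domWins_true_elim {W : Type*} {G' : SimpleGraph W} {q : Pos W}
    (h : DomWins G' true q) :
    (¬SepyEnd G' q ∧ DomEnd G' q) ∨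
    (∃ v c, ¬SepyEnd G' q ∧ ¬DomEnd G' q ∧ LegalMove G' q v c ∧
      DomWins G' false (q.play v c)) := by
  cases h
  case terminal h1 h2 => exact Or.inl ⟨h1, h2⟩
  case domStep v c h1 h2 h3 h4 => exact Or.inr ⟨v, c, h1, h2, h3, h4⟩

lemma not_sepyEnd_base {G : SimpleGraph V} {S : Set V}
    (hS : ∀ ⦃a b⦄, a ∈ S → G.Adj a b → b ∈ S) {p : Pos V}
    (hKse : ¬SepyEnd (G.induce S) (res S p)) (hout : Hout G S p) (hdisj : Hdisj p) :
    ¬SepyEnd G p := by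
  intro h
  rcases sepyEnd_iff.1 h with ⟨w, c₀, hw⟩
  by_cases hwS : w ∈ S
  · exact hKse (sepyEnd_res_of hS hwS hw)
  · have hwc : w ∈ p.colorSet c₀ := hw (self_mem_closedNbhd _ _)
    obtain ⟨z, hz1, hz2⟩ := hout w c₀ hwS hwc
    exact hdisj z c₀ (hw (adj_mem_closedNbhd hz1)) hz2

lemma not_sepyEnd_play {G : SimpleGraph V} {S : Set V}
    (hS : ∀ ⦃a b⦄, a ∈ S → G.Adj a b → b ∈ S) (hiso : ∀ v : V, ∃ u : V, G.Adj v u)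
    {p : Pos V} {v : V} {c : Bool}
    (hKse : ¬SepyEnd (G.induce S) (res S p)) (hout : Hout G S p)
    (hdisj' : Hdisj (p.play v c)) (hvS : v ∉ S) (hleg : LegalMove G p v c) :
    ¬SepyEnd G (p.play v c) := by
  intro h
  rcases sepyEnd_iff.1 h with ⟨w, c₀, hw⟩
  by_cases hwS : w ∈ S
  · refine hKse (sepyEnd_res_of hS hwS (c := c₀) fun x hx => ?_)
    rcases Pos.mem_play_colorSet.1 (hw hx) with ⟨rfl, -⟩ | h'
    · exact absurd (closedNbhd_subset hS hwS hx) hvS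
    · exact h'
  · by_cases hwv : w = v
    · subst hwv
      have hvmem : w ∈ (p.play w c).colorSet c₀ := hw (self_mem_closedNbhd _ _)
      have hc₀ : c₀ = c := by
        rcases Pos.mem_play_colorSet.1 hvmem with ⟨-, h'⟩ | h'
        · exact h'
        · exact absurd (Pos.mem_colored_iff.2 ⟨c₀, h'⟩) hleg.1
      subst hc₀
      obtain ⟨hvunc, u₀, hu₀, hemp⟩ := hleg
      obtain ⟨u₁, hadj₁⟩ := hiso w
      have hu₁ : u₁ ∈ p.colorSet c₀ := by
        rcases Pos.mem_play_colorSet.1 (hw (adj_mem_closedNbhd hadj₁)) with ⟨rfl, -⟩ | h'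
        · exact absurd rfl hadj₁.ne'
        · exact h'
      rcases mem_closedNbhd.1 hu₀ with rfl | hadj₀
      · exact Set.eq_empty_iff_forall_notMem.1 hemp u₁ ⟨adj_mem_closedNbhd hadj₁, hu₁⟩
      · have hu₀c : u₀ ∈ p.colorSet c₀ := by
          rcases Pos.mem_play_colorSet.1 (hw (adj_mem_closedNbhd hadj₀)) with ⟨rfl, -⟩ | h'
          · exact absurd rfl hadj₀.ne'
          · exact h'
        exact Set.eq_empty_iff_forall_notMem.1 hemp u₀ ⟨self_mem_closedNbhd _ _, hu₀c⟩
    · have hwc : w ∈ p.colorSet c₀ := by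
        rcases Pos.mem_play_colorSet.1 (hw (self_mem_closedNbhd _ _)) with ⟨rfl, -⟩ | h'
        · exact absurd rfl hwv
        · exact h'
      obtain ⟨z, hz1, hz2⟩ := hout w c₀ hwS hwc
      exact hdisj' z c₀ (hw (adj_mem_closedNbhd hz1)) (Pos.colorSet_subset_play _ _ _ _ hz2)

lemma ncard_uncolored_play_lt [Fintype V] (p : Pos V) (v : V) (c : Bool)
    (hv : v ∉ p.purple ∪ p.blue) :
    (((p.play v c).purple ∪ (p.play v c).blue)ᶜ).ncard < ((p.purple ∪ p.blue)ᶜ).ncard := by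
  rw [Pos.colored_play]
  have hins : (insert v (p.purple ∪ p.blue))ᶜ = (p.purple ∪ p.blue)ᶜ \ {v} := by
    ext x
    simp only [Set.mem_compl_iff, Set.mem_insert_iff, not_or, Set.mem_diff,
      Set.mem_singleton_iff]
    tauto
  rw [hins]
  exact Set.ncard_diff_singleton_lt_of_mem hv (Set.toFinite _)

lemma Hout.play_mem {G : SimpleGraph V} {S : Set V} {p : Pos V} (hout : Hout G S p)
    {v : V} (hvS : v ∈ S) (c : Bool) : Hout G S (p.play v c) := by
  intro y c₀ hyS hy
  rcases Pos.mem_play_colorSet.1 hy with ⟨rfl, rfl⟩ | hy'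
  · exact absurd hvS hyS
  · obtain ⟨z, h1, h2⟩ := hout y c₀ hyS hy'
    exact ⟨z, h1, Pos.colorSet_subset_play _ _ _ _ h2⟩

lemma phaseA [Fintype V] (G : SimpleGraph V) (S : Set V)
    (hS : ∀ ⦃a b⦄, a ∈ S → G.Adj a b → b ∈ S)
    (hiso : ∀ v : V, ∃ u : V, G.Adj v u) :
    ∀ n (p : Pos V), ((p.purple ∪ p.blue)ᶜ).ncard ≤ n →
      Hdisj p → Hout G S p → DomWins (G.induce S) false (res S p) →
      ∀ first, DomWinsDP G false first p := by
  intro n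
  induction n with
  | zero =>
    intro p hn hdisj hout hK first
    have hnse := not_sepyEnd_base hS (notSepyEnd_of_domWins_false hK) hout hdisj
    by_cases hde : DomEnd G p
    · exact .terminal _ _ _ hnse hde
    · obtain ⟨v, c, hleg⟩ := exists_legal hnse hde
      have h0 : ((p.purple ∪ p.blue)ᶜ).ncard = 0 := Nat.le_zero.1 hn
      have hempty : (p.purple ∪ p.blue)ᶜ = ∅ :=
        (Set.ncard_eq_zero (Set.toFinite _)).1 h0
      exact absurd (hempty ▸ hleg.1 : v ∈ (∅ : Set V)) (Set.notMem_empty v)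
  | succ n IH =>
    intro p hn hdisj hout hK first
    have hKse := notSepyEnd_of_domWins_false hK
    have hnse := not_sepyEnd_base hS hKse hout hdisj
    by_cases hde : DomEnd G p
    · exact .terminal _ _ _ hnse hde
    refine .sepyStep first p hnse hde (exists_legal hnse hde) ?_
    intro v c hleg
    have hv := hleg.1
    have hdisj' : Hdisj (p.play v c) := hdisj.play hv c
    have hn' : (((p.play v c).purple ∪ (p.play v c).blue)ᶜ).ncard ≤ n := by
      have := ncard_uncolored_play_lt p v c hv
      omega
    by_cases hvS : v ∈ S
    · have hlegK := legal_res hS hvS hleg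
      rcases domWins_false_elim hK with ⟨h1, h2⟩ | ⟨h1, h2, h3, hall⟩
      · exact (no_legal_of_domEnd h2 hlegK).elim
      · have hKnext : DomWins (G.induce S) true (res S (p.play v c)) := by
          rw [res_play_mem hvS]
          exact hall _ c hlegK
        have hout' : Hout G S (p.play v c) := hout.play_mem hvS c
        rcases domWins_true_elim hKnext with ⟨g1, g2⟩ | ⟨w, c', g1, g2, glegK, gnext⟩
        · have hnse' := not_sepyEnd_base hS g1 hout' hdisj'
          by_cases hde' : DomEnd G (p.play v c)
          · exact .terminal _ _ _ hnse' hde'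
          · exact .domPass _ hnse' hde'
              (IH _ hn' hdisj' hout' (.terminal false _ g1 g2) false)
        · have hnse' := not_sepyEnd_base hS g1 hout' hdisj'
          have hde' : ¬DomEnd G (p.play v c) := fun h => g2 (domEnd_res hS h)
          have glegG := legal_of_res hS glegK
          refine .domStep false _ w.val c' hnse' hde' glegG (IH _ ?_ ?_ ?_ ?_ false)
          · have := ncard_uncolored_play_lt (p.play v c) w.val c' glegG.1
            omega
          · exact hdisj'.play glegG.1 c'
          · exact hout'.play_mem w.2 c'
          · rw [res_play_mem w.2]
            exact gnext
    · have hres' : res S (p.play v c) = res S p := res_play_not_mem hvS p c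
      have hnse' : ¬SepyEnd G (p.play v c) :=
        not_sepyEnd_play hS hiso hKse hout hdisj' hvS hleg
      by_cases hde' : DomEnd G (p.play v c)
      · exact .terminal _ _ _ hnse' hde'
      by_cases hopp : ∃ z, G.Adj v z ∧ z ∈ (p.play v c).colorSet (!c)
      · have hout' : Hout G S (p.play v c) := by
          intro y c₀ hyS hy
          rcases Pos.mem_play_colorSet.1 hy with ⟨rfl, rfl⟩ | hy'
          · exact hopp
          · obtain ⟨z, h1, h2⟩ := hout y c₀ hyS hy'
            exact ⟨z, h1, Pos.colorSet_subset_play _ _ _ _ h2⟩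
        exact .domPass _ hnse' hde' (IH _ hn' hdisj' hout' (hres' ▸ hK) false)
      · push_neg at hopp
        have hu : ∃ u, G.Adj v u ∧ u ∉ (p.play v c).purple ∪ (p.play v c).blue := by
          by_contra h
          push_neg at h
          obtain ⟨hvunc, u₀, hu₀, hemp⟩ := hleg
          obtain ⟨u₁, hadj₁⟩ := hiso v
          have hcol : ∀ z, G.Adj v z → z ∈ p.colorSet c := by
            intro z hz
            obtain ⟨c₀, hc₀⟩ := Pos.mem_colored_iff.1 (h z hz)
            rcases Pos.mem_play_colorSet.1 hc₀ with ⟨rfl, -⟩ | hc₀'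
            · exact absurd rfl hz.ne'
            · rcases Bool.eq_or_eq_not c₀ c with rfl | rfl
              · exact hc₀'
              · exact absurd (Pos.colorSet_subset_play _ v c _ hc₀') (hopp z hz)
          rcases mem_closedNbhd.1 hu₀ with rfl | hadj₀
          · exact Set.eq_empty_iff_forall_notMem.1 hemp u₁
              ⟨adj_mem_closedNbhd hadj₁, hcol u₁ hadj₁⟩
          · exact Set.eq_empty_iff_forall_notMem.1 hemp u₀
              ⟨self_mem_closedNbhd _ _, hcol u₀ hadj₀⟩
        obtain ⟨u, hadj_u, hu_unc⟩ := hu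
        have huS : u ∉ S := fun h => hvS (hS h hadj_u.symm)
        have hvc' : v ∈ (p.play v c).colorSet c := Pos.self_mem_play_colorSet p v c
        have hlegu : LegalMove G (p.play v c) u (!c) := by
          refine ⟨hu_unc, v, adj_mem_closedNbhd hadj_u.symm, ?_⟩
          rw [Set.eq_empty_iff_forall_notMem]
          rintro x ⟨hx1, hx2⟩
          rcases mem_closedNbhd.1 hx1 with rfl | hadj
          · exact hdisj' x c hvc' hx2
          · exact hopp x hadj hx2
        refine .domStep false _ u (!c) hnse' hde' hlegu (IH _ ?_ ?_ ?_ ?_ false)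
        · have := ncard_uncolored_play_lt (p.play v c) u (!c) hu_unc
          omega
        · exact hdisj'.play hu_unc (!c)
        · intro y c₀ hyS hy
          rcases Pos.mem_play_colorSet.1 hy with ⟨rfl, rfl⟩ | hy'
          · refine ⟨v, hadj_u.symm, ?_⟩
            rw [Bool.not_not]
            exact Pos.colorSet_subset_play _ _ _ _ hvc'
          · rcases Pos.mem_play_colorSet.1 hy' with ⟨rfl, rfl⟩ | hy''
            · exact ⟨u, hadj_u, Pos.self_mem_play_colorSet _ u _⟩
            · obtain ⟨z, h1, h2⟩ := hout y c₀ hyS hy''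
              exact ⟨z, h1, Pos.colorSet_subset_play _ _ _ _
                (Pos.colorSet_subset_play _ _ _ _ h2)⟩
        · rw [res_play_not_mem huS, hres']
          exact hK

end DDG


open DDG


/-- Theorem 3′ of the paper: in the variant of the Disjoint
Domination Game where Dom may pass on any of his turns except the very first move of
the game (while Sepy must move whenever a legal move exists), (1) Dom has a winning
strategy in the Sepy-start game on every finite isolate-free graph, and (2) Dom has
a winning strategy in the Dom-start game on every finite isolate-free graph having a
connected component on which Dom wins the ordinary Dom-start game. -/
theorem statement8 {V : Type*} [Fintype V] (G : SimpleGraph V)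
    (hiso : ∀ v : V, ∃ u : V, G.Adj v u) :
    DomWinsDP G false true ⟨∅, ∅⟩ ∧
    ((∃ K : G.ConnectedComponent,
        DomWins (G.induce K.supp) true ⟨∅, ∅⟩) →
      DomWinsDP G true true ⟨∅, ∅⟩) := by
  constructor
  · have hS : ∀ ⦃a b : V⦄, a ∈ (∅ : Set V) → G.Adj a b → b ∈ (∅ : Set V) := by
      intro a b ha _
      exact ha.elim
    refine phaseA G ∅ hS hiso _ ⟨∅, ∅⟩ le_rfl ?_ ?_ ?_ true
    · exact Hdisj_empty
    · intro y c hy hyc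
      rw [Pos.colorSet_empty] at hyc
      exact hyc.elim
    · refine DomWins.terminal false _ ?_ ?_
      · rintro ⟨v, -⟩
        exact absurd v.2 (Set.notMem_empty v.val)
      · constructor <;> intro v <;> exact absurd v.2 (Set.notMem_empty v.val)
  · rintro ⟨K, hwin⟩
    have hS : ∀ ⦃a b : V⦄, a ∈ K.supp → G.Adj a b → b ∈ K.supp := by
      intro a b ha hab
      rw [SimpleGraph.ConnectedComponent.mem_supp_iff] at ha ⊢
      rw [← ha]
      exact SimpleGraph.ConnectedComponent.sound hab.symm.reachable
    have hempty_res : res K.supp (⟨∅, ∅⟩ : Pos V) = ⟨∅, ∅⟩ := by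
      unfold res
      simp
    rcases domWins_true_elim hwin with ⟨h1, h2⟩ | ⟨v', c, h1, h2, hlegK, hnext⟩
    · exfalso
      obtain ⟨v₀, hv₀⟩ := K.exists_rep
      have hv₀S : v₀ ∈ K.supp := (SimpleGraph.ConnectedComponent.mem_supp_iff K v₀).2 hv₀
      obtain ⟨x, -, hx⟩ := h2.1 ⟨v₀, hv₀S⟩
      exact hx
    · refine DomWinsDP.domStep true _ v'.val c ?_ ?_ ?_ ?_
      · rintro ⟨w, hw | hw⟩ <;>
          exact Set.notMem_empty w (hw (self_mem_closedNbhd G w))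
      · rintro ⟨hdom, -⟩
        obtain ⟨x, -, hx⟩ := hdom v'.val
        exact hx
      · refine ⟨?_, v'.val, self_mem_closedNbhd G v'.val, ?_⟩
        · rintro (h | h) <;> exact Set.notMem_empty _ h
        · rw [Pos.colorSet_empty, Set.inter_empty]
      · refine phaseA G K.supp hS hiso _ _ le_rfl ?_ ?_ ?_ false
        · exact Hdisj_empty.play (by rintro (h | h) <;> exact h) c
        · intro y c₀ hyS hy
          rcases Pos.mem_play_colorSet.1 hy with ⟨rfl, rfl⟩ | hy'
          · exact absurd v'.2 hyS
          · rw [Pos.colorSet_empty] at hy'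
            exact hy'.elim
        · rw [res_play_mem v'.2, hempty_res]
          exact hnext
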